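/- arXiv:1604.02516 — 4 statements merged into one kernel-verified Lean document; each statement's English description precedes it below -/
import Mathlib

section
/- For p, q ∈ ℝ³ with p₀ = √(1+|p|²), q₀ = √(1+|q|²) and g² = 2(p₀q₀ − p·q − 1), one has the lower bound g ≥ √(|p×q|² + |p−q|²) / √(p₀q₀). -/
open scoped RealInnerProductSpace

noncomputable section

/-- Relativistic energy `p₀ = √(1+|p|²)`. -/
def en (p : EuclideanSpace ℝ (Fin 3)) : ℝ := Real.sqrt (1 + ‖p‖ ^ 2)

/-- Relative momentum `g ≥ 0` with `g² = 2(p₀q₀ − p·q − 1)`. -/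
def relg (p q : EuclideanSpace ℝ (Fin 3)) : ℝ :=
  Real.sqrt (2 * (en p * en q - ⟪p, q⟫ - 1))

/-- Euclidean norm of the cross product `|p × q|`. -/
def crossNorm (p q : EuclideanSpace ℝ (Fin 3)) : ℝ :=
  ‖(WithLp.equiv 2 (Fin 3 → ℝ)).symm
      (crossProduct (WithLp.equiv 2 (Fin 3 → ℝ) p) (WithLp.equiv 2 (Fin 3 → ℝ) q))‖

/-! By Lagrange's identity `|p × q|² + |p − q|² = (p₀q₀)² − (p·q + 1)²`, and for `a = p₀q₀ > 0`
and any `c` one has `(a² − c²)/a ≤ 2(a − c)`, the difference being `(a − c)²/a`. Taking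
`c = p·q + 1` and square roots gives the bound. -/

lemma real_inner_eq_dotProduct {ι : Type*} [Fintype ι] (x y : EuclideanSpace ℝ ι) :
    ⟪x, y⟫ = WithLp.equiv 2 _ x ⬝ᵥ WithLp.equiv 2 _ y := by
  simp [EuclideanSpace.inner_eq_star_dotProduct, dotProduct_comm]

lemma crossNorm_sq (p q : EuclideanSpace ℝ (Fin 3)) :
    crossNorm p q ^ 2 = ‖p‖ ^ 2 * ‖q‖ ^ 2 - ⟪p, q⟫ ^ 2 := by
  rw [crossNorm, ← real_inner_self_eq_norm_sq, ← real_inner_self_eq_norm_sq,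
    ← real_inner_self_eq_norm_sq, real_inner_eq_dotProduct, real_inner_eq_dotProduct,
    real_inner_eq_dotProduct, real_inner_eq_dotProduct, Equiv.apply_symm_apply, cross_dot_cross,
    dotProduct_comm (WithLp.equiv 2 _ q) (WithLp.equiv 2 _ p)]
  ring

lemma en_pos (p : EuclideanSpace ℝ (Fin 3)) : 0 < en p :=
  Real.sqrt_pos.2 (by positivity)

lemma en_sq (p : EuclideanSpace ℝ (Fin 3)) : en p ^ 2 = 1 + ‖p‖ ^ 2 :=
  Real.sq_sqrt (by positivity)

lemma crossNorm_sq_add_norm_sub_sq (p q : EuclideanSpace ℝ (Fin 3)) :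
    crossNorm p q ^ 2 + ‖p - q‖ ^ 2 = (en p * en q) ^ 2 - (⟪p, q⟫ + 1) ^ 2 := by
  rw [crossNorm_sq, mul_pow, en_sq, en_sq, norm_sub_sq_real]
  ring

lemma sq_sub_sq_div_le {a : ℝ} (ha : 0 < a) (c : ℝ) : (a ^ 2 - c ^ 2) / a ≤ 2 * (a - c) := by
  rw [div_le_iff₀ ha]
  nlinarith [sq_nonneg (a - c)]

theorem relg_lower_bound (p q : EuclideanSpace ℝ (Fin 3)) :
    Real.sqrt (crossNorm p q ^ 2 + ‖p - q‖ ^ 2) / Real.sqrt (en p * en q) ≤ relg p q := by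
  have hpq : 0 < en p * en q := mul_pos (en_pos p) (en_pos q)
  rw [← Real.sqrt_div' _ hpq.le, relg, crossNorm_sq_add_norm_sub_sq]
  refine Real.sqrt_le_sqrt ?_
  linarith [sq_sub_sq_div_le hpq (⟪p, q⟫ + 1)]
end
end

section
/- Let l = (p₀+q₀)/2 and j = |p×q|/g, where p₀ = √(1+|p|²), q₀ = √(1+|q|²) and g² = 2(p₀q₀ − p·q − 1) with g > 0. Then l² − j² = ((g²+4)/(4g²))|p−q|² and moreover l² − j² ≥ 1 + |p−q|²/4. -/
open scoped RealInnerProductSpace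

noncomputable section

lemma en_nonneg (p : EuclideanSpace ℝ (Fin 3)) : 0 ≤ en p := Real.sqrt_nonneg _

lemma one_add_inner_le_en_mul_en (p q : EuclideanSpace ℝ (Fin 3)) :
    1 + ⟪p, q⟫ ≤ en p * en q := by
  have hpq : 1 + ‖p‖ * ‖q‖ ≤ en p * en q := by
    refine abs_le_of_sq_le_sq' ?_ (mul_nonneg (en_nonneg p) (en_nonneg q)) |>.2
    rw [mul_pow, en_sq, en_sq]
    nlinarith [sq_nonneg (‖p‖ - ‖q‖)]
  linarith [real_inner_le_norm p q]

lemma relg_sq (p q : EuclideanSpace ℝ (Fin 3)) :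
    relg p q ^ 2 = 2 * (en p * en q - ⟪p, q⟫ - 1) :=
  Real.sq_sqrt (by linarith [one_add_inner_le_en_mul_en p q])

lemma norm_sub_sq_eq_relg_sq_add_sq (p q : EuclideanSpace ℝ (Fin 3)) :
    ‖p - q‖ ^ 2 = relg p q ^ 2 + (en p - en q) ^ 2 := by
  rw [norm_sub_sq_real, relg_sq]
  linear_combination -en_sq p - en_sq q

lemma relg_sq_mul_en_add_en_sq_sub_four_mul_crossNorm_sq (p q : EuclideanSpace ℝ (Fin 3)) :
    relg p q ^ 2 * (en p + en q) ^ 2 - 4 * crossNorm p q ^ 2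
      = (relg p q ^ 2 + 4) * ‖p - q‖ ^ 2 := by
  have hp : ‖p‖ ^ 2 = en p ^ 2 - 1 := by linarith [en_sq p]
  have hq : ‖q‖ ^ 2 = en q ^ 2 - 1 := by linarith [en_sq q]
  rw [crossNorm_sq, norm_sub_sq_real, relg_sq, hp, hq]
  ring

theorem l_sq_sub_j_sq (p q : EuclideanSpace ℝ (Fin 3)) (hg : 0 < relg p q) :
    ((en p + en q) / 2) ^ 2 - (crossNorm p q / relg p q) ^ 2
        = ((relg p q ^ 2 + 4) / (4 * relg p q ^ 2)) * ‖p - q‖ ^ 2 ∧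
    1 + ‖p - q‖ ^ 2 / 4 ≤ ((en p + en q) / 2) ^ 2 - (crossNorm p q / relg p q) ^ 2 := by
  have hg2 : 0 < relg p q ^ 2 := by positivity
  have hidentity : ((en p + en q) / 2) ^ 2 - (crossNorm p q / relg p q) ^ 2
      = ((relg p q ^ 2 + 4) / (4 * relg p q ^ 2)) * ‖p - q‖ ^ 2 := by
    field_simp
    linear_combination 4 * relg_sq_mul_en_add_en_sq_sub_four_mul_crossNorm_sq p q
  refine ⟨hidentity, ?_⟩
  have hsplit : ((relg p q ^ 2 + 4) / (4 * relg p q ^ 2)) * ‖p - q‖ ^ 2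
      = ‖p - q‖ ^ 2 / 4 + ‖p - q‖ ^ 2 / relg p q ^ 2 := by
    field_simp
  have hone : 1 ≤ ‖p - q‖ ^ 2 / relg p q ^ 2 := by
    rw [one_le_div hg2, norm_sub_sq_eq_relg_sq_add_sq]
    exact le_add_of_nonneg_right (sq_nonneg _)
  linarith
end
end

section
/- Let 0 ≤ α₁ < 3, α₂ ≥ 0, and β > 3 + α₁ + α₂. Then there exists C > 0 such that for all p ∈ ℝ³, ∫_{ℝ³} (1+|q|)^{−β} / (|p−q|^{α₁} (1+|p−q|)^{α₂}) dq ≤ C (1+|p|)^{−α₁−α₂}. -/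
/-!
Split the kernel `‖x‖ ^ (-α₁) * (1 + ‖x‖) ^ (-α₂)` into its local singularity on the unit ball,
which is integrable since `α₁` is less than the dimension `d`, and a tail bounded by
`2 ^ α₁ * (1 + ‖x‖) ^ (-(α₁ + α₂))`. Near the singularity `q` is within distance `1` of `p`, so
the weight `(1 + ‖q‖) ^ (-β)` is comparable to `(1 + ‖p‖) ^ (-β)`; on the tail, Peetre's
inequality trades the decay in `p - q` for decay in `p` at the cost of the factor
`(1 + ‖q‖) ^ (α₁ + α₂)`, which the weight absorbs since `β - α₁ - α₂ > d`.
-/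

open MeasureTheory Real Metric Set

section Estimates

variable {E : Type*} [NormedAddCommGroup E]

lemma one_add_norm_rpow_neg_le_of_norm_sub_lt_one {p q : E} (hpq : ‖p - q‖ < 1) {β : ℝ}
    (hβ : 0 ≤ β) : (1 + ‖q‖) ^ (-β) ≤ 2 ^ β * (1 + ‖p‖) ^ (-β) := by
  have hpq' : (1 + ‖p‖) / 2 ≤ 1 + ‖q‖ := by
    linarith [norm_le_norm_add_norm_sub' p q, norm_nonneg q]
  calc (1 + ‖q‖) ^ (-β) ≤ ((1 + ‖p‖) / 2) ^ (-β) :=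
        rpow_le_rpow_of_nonpos (by positivity) hpq' (by linarith)
    _ = 2 ^ β * (1 + ‖p‖) ^ (-β) := by
        rw [div_rpow (by positivity) zero_le_two, rpow_neg zero_le_two, div_inv_eq_mul, mul_comm]

/-- Peetre's inequality. -/
lemma one_add_norm_sub_rpow_neg_le (p q : E) {s : ℝ} (hs : 0 ≤ s) :
    (1 + ‖p - q‖) ^ (-s) ≤ (1 + ‖q‖) ^ s * (1 + ‖p‖) ^ (-s) := by
  have peetre : 1 + ‖p‖ ≤ (1 + ‖p - q‖) * (1 + ‖q‖) := by
    nlinarith [norm_le_norm_add_norm_sub' p q, norm_nonneg q, norm_nonneg (p - q)]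
  have hp : 0 < (1 + ‖p‖) ^ s := by positivity
  have hpq : 0 < (1 + ‖p - q‖) ^ s := by positivity
  rw [rpow_neg (by positivity), rpow_neg (by positivity), ← div_eq_mul_inv,
    inv_le_iff_one_le_mul₀ hpq, ← mul_div_right_comm, one_le_div hp, mul_comm,
    ← mul_rpow (by positivity) (by positivity)]
  exact rpow_le_rpow (by positivity) peetre hs

lemma norm_rpow_neg_mul_one_add_norm_rpow_neg_le (x : E) {α₁ α₂ : ℝ} (h₁ : 0 ≤ α₁)
    (h₂ : 0 ≤ α₂) :
    ‖x‖ ^ (-α₁) * (1 + ‖x‖) ^ (-α₂) ≤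
      (ball 0 1).indicator (fun y ↦ ‖y‖ ^ (-α₁)) x + 2 ^ α₁ * (1 + ‖x‖) ^ (-(α₁ + α₂)) := by
  by_cases hx : ‖x‖ < 1
  · rw [indicator_of_mem (mem_ball_zero_iff.2 hx)]
    have : (1 + ‖x‖) ^ (-α₂) ≤ 1 :=
      rpow_le_one_of_one_le_of_nonpos (by linarith [norm_nonneg x]) (by linarith)
    nlinarith [rpow_nonneg (norm_nonneg x) (-α₁),
      (by positivity : 0 ≤ 2 ^ α₁ * (1 + ‖x‖) ^ (-(α₁ + α₂)))]
  · rw [indicator_of_notMem (by simpa using hx), zero_add]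
    have hx' : (1 + ‖x‖) / 2 ≤ ‖x‖ := by linarith
    calc ‖x‖ ^ (-α₁) * (1 + ‖x‖) ^ (-α₂)
        ≤ ((1 + ‖x‖) / 2) ^ (-α₁) * (1 + ‖x‖) ^ (-α₂) := by
          refine mul_le_mul_of_nonneg_right ?_ (by positivity)
          exact rpow_le_rpow_of_nonpos (by positivity) hx' (by linarith)
      _ = 2 ^ α₁ * (1 + ‖x‖) ^ (-(α₁ + α₂)) := by
          rw [div_rpow (by positivity) zero_le_two, rpow_neg zero_le_two, div_inv_eq_mul,
            neg_add, rpow_add (by positivity)]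
          ring

lemma weighted_kernel_le (p q : E) {α₁ α₂ β : ℝ} (h₁ : 0 ≤ α₁) (h₂ : 0 ≤ α₂)
    (hβ : α₁ + α₂ ≤ β) :
    (1 + ‖q‖) ^ (-β) * (‖p - q‖ ^ (-α₁) * (1 + ‖p - q‖) ^ (-α₂)) ≤
      (1 + ‖p‖) ^ (-(α₁ + α₂)) * (2 ^ β * (ball 0 1).indicator (fun y ↦ ‖y‖ ^ (-α₁)) (q - p) +
        2 ^ α₁ * (1 + ‖q‖) ^ (-(β - α₁ - α₂))) := by
  have local_part : (1 + ‖q‖) ^ (-β) * (ball 0 1).indicator (fun y ↦ ‖y‖ ^ (-α₁)) (p - q) ≤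
      (1 + ‖p‖) ^ (-(α₁ + α₂)) * (2 ^ β * (ball 0 1).indicator (fun y ↦ ‖y‖ ^ (-α₁)) (q - p)) := by
    by_cases hpq : ‖p - q‖ < 1
    · have hqp : q - p ∈ ball (0 : E) 1 := by rwa [mem_ball_zero_iff, norm_sub_rev]
      rw [indicator_of_mem (mem_ball_zero_iff.2 hpq), indicator_of_mem hqp, norm_sub_rev q p]
      have hp : (1 + ‖p‖) ^ (-β) ≤ (1 + ‖p‖) ^ (-(α₁ + α₂)) :=
        rpow_le_rpow_of_exponent_le (by linarith [norm_nonneg p]) (by linarith)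
      calc (1 + ‖q‖) ^ (-β) * ‖p - q‖ ^ (-α₁)
          ≤ 2 ^ β * (1 + ‖p‖) ^ (-β) * ‖p - q‖ ^ (-α₁) := by
            gcongr
            exact one_add_norm_rpow_neg_le_of_norm_sub_lt_one hpq (by linarith)
        _ ≤ 2 ^ β * (1 + ‖p‖) ^ (-(α₁ + α₂)) * ‖p - q‖ ^ (-α₁) := by gcongr
        _ = _ := by ring
    · rw [indicator_of_notMem (by simpa using hpq), mul_zero]
      exact mul_nonneg (by positivity) (mul_nonneg (by positivity)
        (indicator_nonneg (fun y _ ↦ by positivity) _))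
  have tail_part : (1 + ‖q‖) ^ (-β) * (1 + ‖p - q‖) ^ (-(α₁ + α₂)) ≤
      (1 + ‖p‖) ^ (-(α₁ + α₂)) * (1 + ‖q‖) ^ (-(β - α₁ - α₂)) := by
    calc (1 + ‖q‖) ^ (-β) * (1 + ‖p - q‖) ^ (-(α₁ + α₂))
        ≤ (1 + ‖q‖) ^ (-β) * ((1 + ‖q‖) ^ (α₁ + α₂) * (1 + ‖p‖) ^ (-(α₁ + α₂))) := by
          gcongr
          exact one_add_norm_sub_rpow_neg_le p q (by linarith)
      _ = (1 + ‖p‖) ^ (-(α₁ + α₂)) * (1 + ‖q‖) ^ (-(β - α₁ - α₂)) := by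
          rw [← mul_assoc, ← rpow_add (by positivity)]
          ring_nf
  calc (1 + ‖q‖) ^ (-β) * (‖p - q‖ ^ (-α₁) * (1 + ‖p - q‖) ^ (-α₂))
      ≤ (1 + ‖q‖) ^ (-β) * ((ball 0 1).indicator (fun y ↦ ‖y‖ ^ (-α₁)) (p - q) +
          2 ^ α₁ * (1 + ‖p - q‖) ^ (-(α₁ + α₂))) := by
        gcongr
        exact norm_rpow_neg_mul_one_add_norm_rpow_neg_le (p - q) h₁ h₂
    _ ≤ _ := by linear_combination local_part + 2 ^ α₁ * tail_part

end Estimates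

section Integral

variable {E : Type*} [NormedAddCommGroup E] [NormedSpace ℝ E] [FiniteDimensional ℝ E]
  [MeasurableSpace E] [BorelSpace E] {μ : Measure E} [μ.IsAddHaarMeasure]

lemma integrable_indicator_ball_norm_rpow_neg {α : ℝ} (h₀ : 0 ≤ α)
    (hd : α < Module.finrank ℝ E) :
    Integrable ((ball (0 : E) 1).indicator fun y ↦ ‖y‖ ^ (-α)) μ := by
  have hd' : 1 ≤ Module.finrank ℝ E := by exact_mod_cast (h₀.trans_lt hd : (0 : ℝ) < _)
  rw [integrable_indicator_iff measurableSet_ball]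
  refine integrableOn_ball_of_norm_le_rpow (C := 1) hd' hd (.of_forall fun y ↦ ?_)
    (Measurable.aestronglyMeasurable (by fun_prop))
  rw [one_mul, norm_of_nonneg (by positivity)]

theorem integral_weighted_singular_kernel_le {α₁ α₂ β : ℝ} (h₁ : 0 ≤ α₁)
    (hd : α₁ < Module.finrank ℝ E) (h₂ : 0 ≤ α₂) (hβ : Module.finrank ℝ E + α₁ + α₂ < β)
    (p : E) :
    ∫ q, (1 + ‖q‖) ^ (-β) / (‖p - q‖ ^ α₁ * (1 + ‖p - q‖) ^ α₂) ∂μ ≤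
      (2 ^ β * ∫ y in ball 0 1, ‖y‖ ^ (-α₁) ∂μ +
        2 ^ α₁ * ∫ y, (1 + ‖y‖) ^ (-(β - α₁ - α₂)) ∂μ) * (1 + ‖p‖) ^ (-α₁ - α₂) := by
  set F := (ball (0 : E) 1).indicator fun y ↦ ‖y‖ ^ (-α₁)
  have hF : Integrable F μ := integrable_indicator_ball_norm_rpow_neg h₁ hd
  have hw : Integrable (fun y : E ↦ (1 + ‖y‖) ^ (-(β - α₁ - α₂))) μ :=
    integrable_one_add_norm (by linarith)
  have hmajorant : Integrable (fun q ↦ (1 + ‖p‖) ^ (-(α₁ + α₂)) *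
      (2 ^ β * F (q - p) + 2 ^ α₁ * (1 + ‖q‖) ^ (-(β - α₁ - α₂)))) μ :=
    (((hF.comp_sub_right p).const_mul _).add (hw.const_mul _)).const_mul _
  calc ∫ q, (1 + ‖q‖) ^ (-β) / (‖p - q‖ ^ α₁ * (1 + ‖p - q‖) ^ α₂) ∂μ
      ≤ ∫ q, (1 + ‖p‖) ^ (-(α₁ + α₂)) *
          (2 ^ β * F (q - p) + 2 ^ α₁ * (1 + ‖q‖) ^ (-(β - α₁ - α₂))) ∂μ := by
        refine integral_mono_of_nonneg (.of_forall fun q ↦ by positivity) hmajorant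
          (.of_forall fun q ↦ ?_)
        dsimp only
        -- also valid at `q = p`, since `rpow_neg` holds at `0` thanks to `0⁻¹ = 0`
        rw [div_eq_mul_inv, mul_inv, ← rpow_neg (norm_nonneg _), ← rpow_neg (by positivity)]
        exact weighted_kernel_le p q h₁ h₂
          (by linarith [(Module.finrank ℝ E).cast_nonneg (α := ℝ)])
    _ = _ := by
        rw [integral_const_mul, integral_add ((hF.comp_sub_right p).const_mul _) (hw.const_mul _),
          integral_const_mul, integral_const_mul, integral_sub_right_eq_self F p,
          integral_indicator measurableSet_ball, neg_add', mul_comm]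

end Integral

theorem singular_kernel_integral_bound (α₁ α₂ β : ℝ)
    (h1 : 0 ≤ α₁) (h2 : α₁ < 3) (h3 : 0 ≤ α₂) (h4 : 3 + α₁ + α₂ < β) :
    ∃ C > 0, ∀ p : EuclideanSpace ℝ (Fin 3),
      (∫ q : EuclideanSpace ℝ (Fin 3),
          (1 + ‖q‖) ^ (-β) / (‖p - q‖ ^ α₁ * (1 + ‖p - q‖) ^ α₂))
        ≤ C * (1 + ‖p‖) ^ (-α₁ - α₂) := by
  have hd : α₁ < Module.finrank ℝ (EuclideanSpace ℝ (Fin 3)) := by simpa using h2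
  have hβ : Module.finrank ℝ (EuclideanSpace ℝ (Fin 3)) + α₁ + α₂ < β := by simpa using h4
  set K := 2 ^ β * (∫ y in ball (0 : EuclideanSpace ℝ (Fin 3)) 1, ‖y‖ ^ (-α₁)) +
    2 ^ α₁ * ∫ y : EuclideanSpace ℝ (Fin 3), (1 + ‖y‖) ^ (-(β - α₁ - α₂))
  refine ⟨K + 1, by positivity, fun p ↦ ?_⟩
  calc _ ≤ K * (1 + ‖p‖) ^ (-α₁ - α₂) :=
        integral_weighted_singular_kernel_le (μ := volume) h1 hd h3 hβ p
    _ ≤ (K + 1) * (1 + ‖p‖) ^ (-α₁ - α₂) := by gcongr; linarith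
end

section
/- Let J(p) = (1/(4π)) e^{−p₀} with p₀ = √(1+|p|²) be the normalized relativistic Maxwellian (Jüttner distribution). Let Ω be a measure space and F : Ω × ℝ³ → [0,∞) be measurable with F log F − J log J, F − J, and p₀(F−J) integrable. Suppose ∫∫ (F − J) dp dx = M₀, ∫∫ p₀ (F − J) dp dx = E₀, and ∫∫ (F log F − J log J) dp dx ≤ H₀. Then ∫∫_{ {|F−J| < J} } |F−J|²/(4J) dp dx + ∫∫_{ {|F−J| ≥ J} } (1/4)|F−J| dp dx ≤ H₀ + (log(4π) − 1) M₀ + E₀. -/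
open MeasureTheory

noncomputable section

/-- Normalized relativistic Maxwellian (Jüttner distribution) `J(p) = (1/(4π)) e^{−p₀}`. -/
def Jutt (p : EuclideanSpace ℝ (Fin 3)) : ℝ := (1 / (4 * Real.pi)) * Real.exp (-en p)

open Real InformationTheory

/-! With `φ(t) = t log t − t + 1` (`klFun`), the integrand `F log F − J log J − (1 + log J)(F − J)`
equals `J φ(F/J)`, and since `log J = −log 4π − p₀` its integral is the relative entropy minus
`(1 − log 4π) M₀ − E₀`. Pointwise, `φ(t) ≥ (t−1)²/2` on `(0, 1]` (because `sinh (log t) ≤ log t`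
there) and `φ(t) ≥ (t−1)²/(t+1)` for `t ≥ 1` (because `log t ≥ 2(t−1)/(t+1)`); this gives
`φ(t) ≥ (t−1)²/4` when `|t − 1| < 1` and `φ(t) ≥ |t − 1|/4` otherwise. -/

lemma sq_sub_one_div_two_le_klFun {t : ℝ} (ht0 : 0 < t) (ht1 : t ≤ 1) :
    (t - 1) ^ 2 / 2 ≤ klFun t := by
  have h : (t - t⁻¹) / 2 ≤ log t := sinh_log ht0 ▸ sinh_le_self_iff.2 (log_nonpos ht0.le ht1)
  have : t * ((t - t⁻¹) / 2) ≤ t * log t := mul_le_mul_of_nonneg_left h ht0.le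
  rw [klFun_apply]
  field_simp at this
  nlinarith

lemma two_mul_sub_one_div_add_one_le_log {t : ℝ} (ht : 1 ≤ t) :
    2 * (t - 1) / (t + 1) ≤ log t := by
  have h := sum_range_le_log_div (x := (t - 1) / (t + 1)) (by positivity)
    (by rw [div_lt_one (by positivity)]; linarith) 1
  have ht' : (1 + (t - 1) / (t + 1)) / (1 - (t - 1) / (t + 1)) = t := by
    field_simp; ring
  rw [ht'] at h
  simp only [Finset.sum_range_one, mul_zero, zero_add, pow_one, Nat.cast_zero, div_one] at h
  rw [mul_div_assoc]
  linarith

lemma sq_sub_one_div_add_one_le_klFun {t : ℝ} (ht : 1 ≤ t) :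
    (t - 1) ^ 2 / (t + 1) ≤ klFun t := by
  have h := mul_le_mul_of_nonneg_left (two_mul_sub_one_div_add_one_le_log ht) (by linarith : 0 ≤ t)
  rw [klFun_apply]
  have : t * (2 * (t - 1) / (t + 1)) - t + 1 = (t - 1) ^ 2 / (t + 1) := by
    field_simp; ring
  linarith

lemma sq_sub_one_div_four_le_klFun {t : ℝ} (ht0 : 0 < t) (ht2 : t ≤ 2) :
    (t - 1) ^ 2 / 4 ≤ klFun t := by
  rcases le_total t 1 with ht1 | ht1
  · linarith [sq_sub_one_div_two_le_klFun ht0 ht1, sq_nonneg (t - 1)]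
  · refine le_trans ?_ (sq_sub_one_div_add_one_le_klFun ht1)
    gcongr
    linarith

lemma abs_sub_one_div_four_le_klFun {t : ℝ} (ht : 0 ≤ t) (h : 1 ≤ |t - 1|) :
    |t - 1| / 4 ≤ klFun t := by
  rcases le_abs'.1 h with h | h
  · obtain rfl : t = 0 := by linarith
    norm_num [klFun_zero]
  · have h1 := sq_sub_one_div_add_one_le_klFun (by linarith : 1 ≤ t)
    rw [abs_of_nonneg (by linarith)]
    refine le_trans ?_ h1
    rw [div_le_div_iff₀ (by norm_num) (by linarith)]
    nlinarith

lemma mul_klFun_div {a b : ℝ} (hb : b ≠ 0) :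
    b * klFun (a / b) = a * log a - b * log b - (1 + log b) * (a - b) := by
  rcases eq_or_ne a 0 with rfl | ha
  · rw [zero_div, klFun_zero, log_zero]
    ring
  · rw [klFun_apply, log_div ha hb]
    field_simp
    ring

lemma abs_sub_sq_div_four_mul_le_mul_klFun_div {a b : ℝ} (hb : 0 < b) (h : |a - b| < b) :
    |a - b| ^ 2 / (4 * b) ≤ b * klFun (a / b) := by
  obtain ⟨h1, h2⟩ := abs_lt.1 h
  calc |a - b| ^ 2 / (4 * b) = b * ((a / b - 1) ^ 2 / 4) := by
        rw [sq_abs]; field_simp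
    _ ≤ b * klFun (a / b) := by
        gcongr
        refine sq_sub_one_div_four_le_klFun (div_pos (by linarith) hb) ?_
        rw [div_le_iff₀ hb]; linarith

lemma one_div_four_mul_abs_sub_le_mul_klFun_div {a b : ℝ} (ha : 0 ≤ a) (hb : 0 < b)
    (h : b ≤ |a - b|) :
    1 / 4 * |a - b| ≤ b * klFun (a / b) := by
  have hab : |a / b - 1| = |a - b| / b := by
    rw [← abs_of_pos hb, ← abs_div, abs_of_pos hb, sub_div, div_self hb.ne']
  calc 1 / 4 * |a - b| = b * (|a / b - 1| / 4) := by
        rw [hab]; field_simp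
    _ ≤ b * klFun (a / b) := by
        gcongr
        refine abs_sub_one_div_four_le_klFun (div_nonneg ha hb.le) ?_
        rw [hab, le_div_iff₀ hb, one_mul]; exact h

theorem setIntegral_add_setIntegral_le_integral_mul_klFun {α : Type*} [MeasurableSpace α]
    {ν : Measure α} {F J : α → ℝ} (hF : Measurable F) (hJ : Measurable J)
    (hF0 : ∀ z, 0 ≤ F z) (hJ0 : ∀ z, 0 < J z)
    (hint : Integrable (fun z => J z * klFun (F z / J z)) ν) :
    (∫ z in {z | |F z - J z| < J z}, |F z - J z| ^ 2 / (4 * J z) ∂ν)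
      + (∫ z in {z | J z ≤ |F z - J z|}, 1 / 4 * |F z - J z| ∂ν)
      ≤ ∫ z, J z * klFun (F z / J z) ∂ν := by
  set s := {z | |F z - J z| < J z}
  have hs : MeasurableSet s := measurableSet_lt (hF.sub hJ).abs hJ
  have hsc : {z | J z ≤ |F z - J z|} = sᶜ := by ext; simp [s]
  rw [hsc, ← integral_add_compl hs hint]
  refine add_le_add (integral_mono_of_nonneg (ae_of_all _ fun z => ?_) hint.integrableOn
    ((ae_restrict_iff' hs).2 (ae_of_all _ fun z hz => ?_)))
    (integral_mono_of_nonneg (ae_of_all _ fun z => ?_) hint.integrableOn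
    ((ae_restrict_iff' hs.compl).2 (ae_of_all _ fun z hz => ?_)))
  · have := hJ0 z; positivity
  · exact abs_sub_sq_div_four_mul_le_mul_klFun_div (hJ0 z) hz
  · positivity
  · exact one_div_four_mul_abs_sub_le_mul_klFun_div (hF0 z) (hJ0 z) (not_lt.1 hz)

lemma Jutt_pos (p : EuclideanSpace ℝ (Fin 3)) : 0 < Jutt p := by
  unfold Jutt
  positivity

lemma log_Jutt (p : EuclideanSpace ℝ (Fin 3)) : log (Jutt p) = -log (4 * π) - en p := by
  rw [Jutt, log_mul (by positivity) (exp_ne_zero _), log_exp, one_div, log_inv]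
  ring

lemma measurable_Jutt : Measurable Jutt := by
  unfold Jutt en
  fun_prop

theorem entropy_defect_bound {Ω : Type*} [MeasurableSpace Ω] (μ : Measure Ω)
    (F : Ω × EuclideanSpace ℝ (Fin 3) → ℝ) (hF : Measurable F) (hFpos : ∀ z, 0 ≤ F z)
    (M₀ E₀ H₀ : ℝ)
    (hInt1 : Integrable
      (fun z => F z * Real.log (F z) - Jutt z.2 * Real.log (Jutt z.2)) (μ.prod volume))
    (hInt2 : Integrable (fun z => F z - Jutt z.2) (μ.prod volume))
    (hInt3 : Integrable (fun z => en z.2 * (F z - Jutt z.2)) (μ.prod volume))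
    (hM : ∫ z, (F z - Jutt z.2) ∂(μ.prod volume) = M₀)
    (hE : ∫ z, en z.2 * (F z - Jutt z.2) ∂(μ.prod volume) = E₀)
    (hH : (∫ z, (F z * Real.log (F z) - Jutt z.2 * Real.log (Jutt z.2)) ∂(μ.prod volume)) ≤ H₀) :
    (∫ z in {z : Ω × EuclideanSpace ℝ (Fin 3) | |F z - Jutt z.2| < Jutt z.2},
        |F z - Jutt z.2| ^ 2 / (4 * Jutt z.2) ∂(μ.prod volume))
      + (∫ z in {z : Ω × EuclideanSpace ℝ (Fin 3) | Jutt z.2 ≤ |F z - Jutt z.2|},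
          (1 / 4) * |F z - Jutt z.2| ∂(μ.prod volume))
      ≤ H₀ + (Real.log (4 * Real.pi) - 1) * M₀ + E₀ := by
  have hlin : Integrable (fun z => (1 - log (4 * π)) * (F z - Jutt z.2) - en z.2 * (F z - Jutt z.2))
      (μ.prod volume) := (hInt2.const_mul _).sub hInt3
  have hdefect : (fun z => Jutt z.2 * klFun (F z / Jutt z.2)) = fun z =>
      (F z * log (F z) - Jutt z.2 * log (Jutt z.2))
        - ((1 - log (4 * π)) * (F z - Jutt z.2) - en z.2 * (F z - Jutt z.2)) := by
    funext z
    rw [mul_klFun_div (Jutt_pos z.2).ne', log_Jutt]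
    ring
  have hint : Integrable (fun z => Jutt z.2 * klFun (F z / Jutt z.2)) (μ.prod volume) := by
    rw [hdefect]
    exact hInt1.sub hlin
  have hJ : Measurable fun z : Ω × EuclideanSpace ℝ (Fin 3) => Jutt z.2 :=
    measurable_Jutt.comp measurable_snd
  refine (setIntegral_add_setIntegral_le_integral_mul_klFun hF hJ hFpos
    (fun z => Jutt_pos z.2) hint).trans ?_
  rw [hdefect, integral_sub hInt1 hlin, integral_sub (hInt2.const_mul _) hInt3,
    integral_const_mul, hM, hE]
  linarith
end
end
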